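/- Define f: ℝ → ℝ by f(x) := x·cosh(2x) − sinh(2x)·log(2·cosh(x)) + (1/2)·tanh(x). Then: (i) −f''(x) + 4f(x) = tanh(x)·sech²(x) for every x ∈ ℝ; (ii) f is odd and f(x) → 0 as x → +∞; and (iii) f(x) > 0 for every x > 0. -/

import Mathlib

/-!
With `t = e^{-2x}` one has `log (2 cosh x) = x + log (1 + t)`, hence
`f x = x t - sinh 2x · log (1 + t) + tanh x / 2`. For `x > 0` the elementary bounds `tanh x ≤ x`
and `1 - u⁻¹ ≤ log u ≤ sinh (log u) = (u - u⁻¹) / 2` (at `u = 1 + t`) squeeze `f x` between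
`t (1 - t)² / (4 (1 + t)) > 0` and `x e^{-2x} → 0`. The differential equation is a direct
computation, in which `cosh 2x - sinh 2x · tanh x = 1` simplifies `f'`.
-/

open Real Filter

theorem hasDerivAt_tanh (x : ℝ) : HasDerivAt tanh ((cosh x)⁻¹ ^ 2) x := by
  rw [show tanh = fun y => sinh y / cosh y from funext tanh_eq_sinh_div_cosh]
  refine ((hasDerivAt_sinh x).div (hasDerivAt_cosh x) (cosh_pos x).ne').congr_deriv ?_
  field_simp
  linarith [cosh_sq x]

theorem tanh_le_self {x : ℝ} (hx : 0 ≤ x) : tanh x ≤ x := by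
  have hmono : Monotone fun y => y - tanh y := by
    refine monotone_of_hasDerivAt_nonneg (fun y => (hasDerivAt_id y).sub (hasDerivAt_tanh y))
      fun y => ?_
    have h₁ : (cosh y)⁻¹ ≤ 1 := inv_le_one_of_one_le₀ (one_le_cosh y)
    have h₀ : 0 ≤ (cosh y)⁻¹ := by positivity
    show 0 ≤ 1 - (cosh y)⁻¹ ^ 2
    nlinarith
  simpa using hmono hx

theorem hasDerivAt_log_two_cosh (x : ℝ) :
    HasDerivAt (fun y => log (2 * cosh y)) (tanh x) x := by
  refine (((hasDerivAt_cosh x).const_mul 2).log (by positivity)).congr_deriv ?_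
  rw [tanh_eq_sinh_div_cosh]
  field_simp

theorem hasDerivAt_inv_cosh_sq (x : ℝ) :
    HasDerivAt (fun y => (cosh y)⁻¹ ^ 2) (-2 * tanh x * (cosh x)⁻¹ ^ 2) x := by
  refine (((hasDerivAt_cosh x).inv (cosh_pos x).ne').pow 2).congr_deriv ?_
  rw [tanh_eq_sinh_div_cosh, Pi.inv_apply]
  norm_num
  field_simp

theorem log_le_half_sub_inv {u : ℝ} (hu : 1 ≤ u) : log u ≤ (u - u⁻¹) / 2 := by
  rw [← sinh_log (by positivity)]
  exact self_le_sinh_iff.mpr (log_nonneg hu)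

theorem log_two_cosh (x : ℝ) : log (2 * cosh x) = x + log (1 + exp (-(2 * x))) := by
  have h : 2 * cosh x = exp x * (1 + exp (-(2 * x))) := by
    rw [cosh_eq, mul_add, ← exp_add]
    ring_nf
  rw [h, log_mul (exp_pos x).ne' (by positivity), log_exp]

theorem sinh_two_mul_eq (x : ℝ) : sinh (2 * x) = ((exp (-(2 * x)))⁻¹ - exp (-(2 * x))) / 2 := by
  rw [sinh_eq, exp_neg, inv_inv]

theorem tanh_eq_exp_neg_two_mul (x : ℝ) :
    tanh x = (1 - exp (-(2 * x))) / (1 + exp (-(2 * x))) := by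
  have h₁ : exp x = (exp (-x))⁻¹ := by rw [exp_neg, inv_inv]
  have h₂ : exp (-(2 * x)) = exp (-x) ^ 2 := by rw [← exp_nat_mul]; ring_nf
  have := exp_pos (-x)
  rw [tanh_eq, h₁, h₂]
  field_simp

-- `𝓚₊ φ` for the black soliton `φ = tanh`
noncomputable def kPlusTanh (x : ℝ) : ℝ :=
  x * cosh (2 * x) - sinh (2 * x) * log (2 * cosh x) + 1 / 2 * tanh x

-- `𝓚₊ φ` for the black soliton `φ = tanh`
noncomputable def kPlusTanhDeriv (x : ℝ) : ℝ :=
  1 + 2 * x * sinh (2 * x) - 2 * cosh (2 * x) * log (2 * cosh x) + 1 / 2 * (cosh x)⁻¹ ^ 2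

theorem hasDerivAt_cosh_two_mul (x : ℝ) :
    HasDerivAt (fun y => cosh (2 * y)) (sinh (2 * x) * 2) x := by
  simpa using ((hasDerivAt_id x).const_mul 2).cosh

theorem hasDerivAt_sinh_two_mul (x : ℝ) :
    HasDerivAt (fun y => sinh (2 * y)) (cosh (2 * x) * 2) x := by
  simpa using ((hasDerivAt_id x).const_mul 2).sinh

theorem hasDerivAt_kPlusTanh (x : ℝ) : HasDerivAt kPlusTanh (kPlusTanhDeriv x) x := by
  have h := (((hasDerivAt_id x).mul (hasDerivAt_cosh_two_mul x)).sub
    ((hasDerivAt_sinh_two_mul x).mul (hasDerivAt_log_two_cosh x))).add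
    ((hasDerivAt_tanh x).const_mul (1 / 2))
  refine h.congr_deriv ?_
  rw [kPlusTanhDeriv, id_eq, cosh_two_mul, sinh_two_mul, tanh_eq_sinh_div_cosh]
  field_simp
  linear_combination (2 * cosh x ^ 2) * cosh_sq x

theorem hasDerivAt_kPlusTanhDeriv (x : ℝ) :
    HasDerivAt kPlusTanhDeriv (2 * sinh (2 * x) + 4 * x * cosh (2 * x)
      - 4 * sinh (2 * x) * log (2 * cosh x) - 2 * cosh (2 * x) * tanh x
      - tanh x * (cosh x)⁻¹ ^ 2) x := by
  have h := (((((hasDerivAt_id x).const_mul 2).mul (hasDerivAt_sinh_two_mul x)).const_add 1).sub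
    (((hasDerivAt_cosh_two_mul x).const_mul 2).mul (hasDerivAt_log_two_cosh x))).add
    ((hasDerivAt_inv_cosh_sq x).const_mul (1 / 2))
  refine h.congr_deriv ?_
  simp only [id_eq]
  ring

theorem neg_deriv_deriv_kPlusTanh_add_four_mul (x : ℝ) :
    -deriv (deriv kPlusTanh) x + 4 * kPlusTanh x = tanh x * (cosh x)⁻¹ ^ 2 := by
  rw [show deriv kPlusTanh = kPlusTanhDeriv from funext fun y => (hasDerivAt_kPlusTanh y).deriv,
    (hasDerivAt_kPlusTanhDeriv x).deriv, kPlusTanh]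
  rw [cosh_two_mul, sinh_two_mul, tanh_eq_sinh_div_cosh]
  field_simp
  linear_combination -(4 * cosh x ^ 2 * sinh x) * cosh_sq x

theorem kPlusTanh_neg (x : ℝ) : kPlusTanh (-x) = -kPlusTanh x := by
  simp only [kPlusTanh, mul_neg, cosh_neg, sinh_neg, tanh_neg]
  ring

theorem kPlusTanh_eq_exp (x : ℝ) : kPlusTanh x =
    x * exp (-(2 * x)) - sinh (2 * x) * log (1 + exp (-(2 * x))) + 1 / 2 * tanh x := by
  rw [kPlusTanh, log_two_cosh]
  linear_combination x * cosh_sub_sinh (2 * x)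

theorem kPlusTanh_pos {x : ℝ} (hx : 0 < x) : 0 < kPlusTanh x := by
  obtain ⟨t, ht⟩ : ∃ t, t = exp (-(2 * x)) := ⟨_, rfl⟩
  have ht₀ : 0 < t := ht ▸ exp_pos _
  have ht₁ : t < 1 := ht ▸ exp_lt_one_iff.mpr (by linarith)
  have hsinh : sinh (2 * x) = (t⁻¹ - t) / 2 := ht ▸ sinh_two_mul_eq x
  have htanh : tanh x = (1 - t) / (1 + t) := ht ▸ tanh_eq_exp_neg_two_mul x
  have hlog : log (1 + t) ≤ ((1 + t) - (1 + t)⁻¹) / 2 := log_le_half_sub_inv (by linarith)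
  have hsinh₀ : 0 ≤ sinh (2 * x) := sinh_nonneg_iff.mpr (by linarith)
  calc 0 < t * (1 - t) ^ 2 / (4 * (1 + t)) := by
        have : 0 < 1 - t := by linarith
        positivity
    _ = tanh x * t - sinh (2 * x) * (((1 + t) - (1 + t)⁻¹) / 2) + 1 / 2 * tanh x := by
        rw [hsinh, htanh]
        field_simp
        ring
    _ ≤ x * t - sinh (2 * x) * log (1 + t) + 1 / 2 * tanh x := by
        gcongr
        exact tanh_le_self hx.le
    _ = kPlusTanh x := by rw [kPlusTanh_eq_exp, ← ht]

theorem kPlusTanh_le {x : ℝ} (hx : 0 ≤ x) : kPlusTanh x ≤ x * exp (-(2 * x)) := by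
  obtain ⟨t, ht⟩ : ∃ t, t = exp (-(2 * x)) := ⟨_, rfl⟩
  have ht₀ : 0 < t := ht ▸ exp_pos _
  have ht₁ : t ≤ 1 := ht ▸ exp_le_one_iff.mpr (by linarith)
  have hsinh : sinh (2 * x) = (t⁻¹ - t) / 2 := ht ▸ sinh_two_mul_eq x
  have htanh : tanh x = (1 - t) / (1 + t) := ht ▸ tanh_eq_exp_neg_two_mul x
  have hsinh₀ : 0 ≤ sinh (2 * x) := sinh_nonneg_iff.mpr (by linarith)
  rw [← ht]
  calc kPlusTanh x = x * t - sinh (2 * x) * log (1 + t) + 1 / 2 * tanh x := by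
        rw [kPlusTanh_eq_exp, ← ht]
    _ ≤ x * t - sinh (2 * x) * (1 - (1 + t)⁻¹) + 1 / 2 * tanh x := by
        gcongr
        exact one_sub_inv_le_log_of_pos (by linarith)
    _ = x * t - t * (1 - t) / (2 * (1 + t)) := by
        rw [hsinh, htanh]
        field_simp
        ring
    _ ≤ x * t := by
        have : 0 ≤ 1 - t := by linarith
        have : 0 ≤ t * (1 - t) / (2 * (1 + t)) := by positivity
        linarith

theorem tendsto_kPlusTanh_atTop : Tendsto kPlusTanh atTop (nhds 0) := by
  have hupper : Tendsto (fun x => x * exp (-(2 * x))) atTop (nhds 0) :=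
    (tendsto_rpow_mul_exp_neg_mul_atTop_nhds_zero 1 2 two_pos).congr fun x => by
      rw [rpow_one, neg_mul]
  refine tendsto_of_tendsto_of_tendsto_of_le_of_le' tendsto_const_nhds hupper ?_ ?_
  · filter_upwards [eventually_gt_atTop 0] with x hx using (kPlusTanh_pos hx).le
  · filter_upwards [eventually_ge_atTop 0] with x hx using kPlusTanh_le hx

/-- Properties of `f(x) = x cosh(2x) - sinh(2x) log(2cosh x) + (1/2) tanh x = (𝓚₊φ)(x)`:
(i) `-f'' + 4f = tanh·sech²`; (ii) `f` is odd and `f(x) → 0` as `x → +∞`;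
(iii) `f(x) > 0` for `x > 0`. -/
theorem stmt_17 :
    let f : ℝ → ℝ := fun x => x * Real.cosh (2*x) - Real.sinh (2*x) * Real.log (2 * Real.cosh x)
      + (1/2) * Real.tanh x
    (∀ x : ℝ, -(deriv (deriv f) x) + 4 * f x = Real.tanh x * ((Real.cosh x)⁻¹)^2) ∧
    (∀ x : ℝ, f (-x) = -f x) ∧
    Tendsto f atTop (nhds 0) ∧
    (∀ x : ℝ, 0 < x → 0 < f x) :=
  ⟨neg_deriv_deriv_kPlusTanh_add_four_mul, kPlusTanh_neg, tendsto_kPlusTanh_atTop,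
    fun _ => kPlusTanh_pos⟩
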